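/- Let w(k) = [(e^k - 1)^{3/2} + 6(e^k - 1)^{1/2} - 6·arctan((e^k - 1)^{1/2})] for k > 0 and w(k) = 0 for k ≤ 0. Then for all complex z with Re z > 3/2, the Laplace transform W(z) = ∫₀^∞ e^{-kz} w(k) dk equals 9√π · (Γ(z + 1/2)/Γ(z + 1)) · (z - 1)/(z(2z - 1)(2z - 3)). -/

import Mathlib

open MeasureTheory Real Set

/-- The weight `w` from the paper. -/
noncomputable def w (k : ℝ) : ℝ :=
  if 0 < k then
    (Real.exp k - 1) ^ (3/2 : ℝ) + 6 * (Real.exp k - 1) ^ (1/2 : ℝ)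
      - 6 * Real.arctan ((Real.exp k - 1) ^ (1/2 : ℝ))
  else 0

/-!
Differentiating, `w'(k) = (3/2) (eᵏ - 1)^{3/2} + (9/2) (eᵏ - 1)^{1/2}` for `k > 0`: the arctan
term exactly cancels the `(eᵏ - 1)^{-1/2}` part of the derivative of `6 (eᵏ - 1)^{1/2}`. Since
`w(0+) = 0` and `w` grows like `e^{3k/2}`, integration by parts gives `z W(z) = ∫ e^{-kz} w'(k) dk`.
The substitution `x = e^{-k}` turns the Laplace transform of `(eᵏ - 1)^p` into the Beta integral
`B(z - p, p + 1) = Γ(z - p) Γ(p + 1) / Γ(z + 1)`, and `Γ(s + 1) = s Γ(s)` collapses the two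
resulting terms into the closed form.
-/

open Filter Topology

theorem image_exp_neg_Ioi_zero : (fun k : ℝ ↦ exp (-k)) '' Ioi 0 = Ioo 0 1 := by
  rw [show (fun k : ℝ ↦ exp (-k)) = exp ∘ Neg.neg from rfl, image_comp, image_neg_Ioi, neg_zero,
    image_exp_Iio, exp_zero]

section ExpNegSubstitution

variable {E : Type*} [NormedAddCommGroup E] [NormedSpace ℝ E]

theorem integral_comp_exp_neg_Ioi_zero (g : ℝ → E) :
    ∫ k in Ioi 0, exp (-k) • g (exp (-k)) = ∫ x in Ioo 0 1, g x := by
  rw [← image_exp_neg_Ioi_zero]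
  simpa using (integral_image_eq_integral_abs_deriv_smul measurableSet_Ioi
    (fun k _ ↦ (hasDerivAt_neg k).exp.hasDerivWithinAt)
    (fun a _ b _ h ↦ neg_injective (exp_injective h)) g).symm

theorem integrableOn_comp_exp_neg_Ioi_zero (g : ℝ → E) :
    IntegrableOn (fun k ↦ exp (-k) • g (exp (-k))) (Ioi 0) ↔ IntegrableOn g (Ioo 0 1) := by
  rw [← image_exp_neg_Ioi_zero]
  simpa using (integrableOn_image_iff_integrableOn_abs_deriv_smul measurableSet_Ioi
    (fun k _ ↦ (hasDerivAt_neg k).exp.hasDerivWithinAt)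
    (fun a _ b _ h ↦ neg_injective (exp_injective h)) g).symm

end ExpNegSubstitution

theorem exp_neg_smul_betaIntegrand {k : ℝ} (hk : 0 < k) (p : ℝ) (z : ℂ) :
    exp (-k) • ((exp (-k) : ℂ) ^ (z - p - 1) * (1 - (exp (-k) : ℂ)) ^ (p : ℂ))
      = Complex.exp (-k * z) * ((exp k - 1) ^ p : ℝ) := by
  have h1 : 0 ≤ 1 - exp (-k) := by
    have := exp_lt_one_iff.mpr (neg_lt_zero.mpr hk); linarith
  have hsplit : exp k - 1 = exp k * (1 - exp (-k)) := by
    rw [mul_sub, mul_one, ← exp_add, add_neg_cancel, exp_zero]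
  have hcpow : (exp (-k) : ℂ) ^ (z - p - 1) = Complex.exp (-k * (z - p - 1)) := by
    rw [Complex.cpow_def_of_ne_zero (by exact_mod_cast (exp_pos _).ne'), ← Complex.ofReal_log
      (exp_pos _).le, log_exp, Complex.ofReal_neg]
  rw [hsplit, mul_rpow (exp_pos k).le h1, ← exp_mul, Complex.real_smul, hcpow,
    ← Complex.ofReal_one, ← Complex.ofReal_sub, ← Complex.ofReal_cpow h1, Complex.ofReal_mul]
  push_cast
  rw [← mul_assoc, ← mul_assoc, ← Complex.exp_add, ← Complex.exp_add]
  ring_nf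

theorem betaIntegral_eq_integral_Ioo (z : ℂ) (p : ℝ) :
    Complex.betaIntegral (z - p) (p + 1)
      = ∫ x in Ioo (0 : ℝ) 1, (x : ℂ) ^ (z - p - 1) * (1 - (x : ℂ)) ^ (p : ℂ) := by
  rw [Complex.betaIntegral, intervalIntegral.integral_of_le zero_le_one,
    integral_Ioc_eq_integral_Ioo, add_sub_cancel_right]

theorem integrableOn_cexp_mul_exp_sub_one_rpow {p : ℝ} (hp : -1 < p) {z : ℂ} (hz : p < z.re) :
    IntegrableOn (fun k : ℝ ↦ Complex.exp (-k * z) * ((exp k - 1) ^ p : ℝ)) (Ioi 0) := by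
  have hbeta := Complex.betaIntegral_convergent (u := z - p) (v := p + 1) (by simpa using hz)
    (by simp; linarith)
  rw [intervalIntegrable_iff_integrableOn_Ioo_of_le zero_le_one, add_sub_cancel_right,
    ← integrableOn_comp_exp_neg_Ioi_zero] at hbeta
  exact hbeta.congr_fun (fun k hk ↦ exp_neg_smul_betaIntegrand hk p z) measurableSet_Ioi

theorem integral_cexp_mul_exp_sub_one_rpow {p : ℝ} (hp : -1 < p) {z : ℂ} (hz : p < z.re) :
    ∫ k in Ioi (0 : ℝ), Complex.exp (-k * z) * ((exp k - 1) ^ p : ℝ)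
      = Complex.Gamma (z - p) * Complex.Gamma (p + 1) / Complex.Gamma (z + 1) := by
  have hzp : 0 < (z - p).re := by simpa using hz
  have hp1 : 0 < ((p : ℂ) + 1).re := by simp; linarith
  rw [Complex.Gamma_mul_Gamma_eq_betaIntegral hzp hp1, show z - p + (p + 1) = z + 1 by ring,
    mul_div_cancel_left₀ _ (Complex.Gamma_ne_zero_of_re_pos (by simp; linarith)),
    betaIntegral_eq_integral_Ioo, ← integral_comp_exp_neg_Ioi_zero]
  exact (setIntegral_congr_fun measurableSet_Ioi fun k hk ↦ exp_neg_smul_betaIntegrand hk p z).symm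

section Laplace

variable {f : ℝ → ℂ} {z : ℂ} {C a : ℝ}

theorem norm_cexp_mul_le_of_norm_le {k : ℝ} (hf : ‖f k‖ ≤ C * exp (a * k)) :
    ‖Complex.exp (-k * z) * f k‖ ≤ C * exp (-(z.re - a) * k) := by
  rw [norm_mul, Complex.norm_exp]
  calc exp (-k * z).re * ‖f k‖ ≤ exp (-k * z).re * (C * exp (a * k)) :=
        mul_le_mul_of_nonneg_left hf (exp_nonneg _)
    _ = C * exp (-(z.re - a) * k) := by
        rw [mul_left_comm, ← exp_add]; congr 2; simp; ring

theorem integrableOn_cexp_mul_of_norm_le (hf : AEStronglyMeasurable f (volume.restrict (Ioi 0)))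
    (hbound : ∀ k, ‖f k‖ ≤ C * exp (a * k)) (ha : a < z.re) :
    IntegrableOn (fun k : ℝ ↦ Complex.exp (-k * z) * f k) (Ioi 0) :=
  ((exp_neg_integrableOn_Ioi 0 (sub_pos.mpr ha)).const_mul C).mono'
    ((Continuous.aestronglyMeasurable (by fun_prop)).mul hf)
    (Eventually.of_forall fun k ↦ norm_cexp_mul_le_of_norm_le (hbound k))

theorem tendsto_cexp_mul_atTop_of_norm_le (hbound : ∀ k, ‖f k‖ ≤ C * exp (a * k))
    (ha : a < z.re) : Tendsto (fun k : ℝ ↦ Complex.exp (-k * z) * f k) atTop (𝓝 0) := by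
  refine squeeze_zero_norm (fun k ↦ norm_cexp_mul_le_of_norm_le (hbound k)) ?_
  simpa using ((tendsto_exp_atBot.comp
    (tendsto_id.const_mul_atTop_of_neg (neg_lt_zero.mpr (sub_pos.mpr ha)))).const_mul C)

theorem integral_cexp_mul_deriv {f' : ℝ → ℂ} (hderiv : ∀ k ∈ Ioi (0 : ℝ), HasDerivAt f (f' k) k)
    (hzero : Tendsto f (𝓝[>] 0) (𝓝 0))
    (hf' : IntegrableOn (fun k : ℝ ↦ Complex.exp (-k * z) * f' k) (Ioi 0))
    (hf : IntegrableOn (fun k : ℝ ↦ Complex.exp (-k * z) * f k) (Ioi 0))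
    (hinfty : Tendsto (fun k : ℝ ↦ Complex.exp (-k * z) * f k) atTop (𝓝 0)) :
    ∫ k in Ioi (0 : ℝ), Complex.exp (-k * z) * f' k
      = z * ∫ k in Ioi (0 : ℝ), Complex.exp (-k * z) * f k := by
  have hexp (k : ℝ) :
      HasDerivAt (fun k : ℝ ↦ Complex.exp (-k * z)) (-z * Complex.exp (-k * z)) k := by
    simpa [mul_comm] using (((hasDerivAt_id (k : ℂ)).neg.mul_const z).cexp).comp_ofReal
  have hzero' : Tendsto (fun k : ℝ ↦ Complex.exp (-k * z) * f k) (𝓝[>] 0) (𝓝 0) := by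
    simpa using ((Continuous.tendsto (by fun_prop) 0).mono_left nhdsWithin_le_nhds).mul hzero
  have hf'' : IntegrableOn ((fun k : ℝ ↦ -z * Complex.exp (-k * z)) * f) (Ioi 0) :=
    IntegrableOn.congr_fun (hf.const_mul (-z)) (fun k _ ↦ by simp only [Pi.mul_apply]; ring)
      measurableSet_Ioi
  rw [integral_Ioi_mul_deriv_eq_deriv_mul (fun k _ ↦ hexp k) hderiv hf' hf'' hzero' hinfty]
  simp_rw [mul_assoc, integral_const_mul]
  ring

end Laplace

noncomputable def wDeriv (k : ℝ) : ℝ :=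
  (3/2) * (exp k - 1) ^ (3/2 : ℝ) + (9/2) * (exp k - 1) ^ (1/2 : ℝ)

theorem hasDerivAt_w {k : ℝ} (hk : 0 < k) :
    HasDerivAt w (wDeriv k) k := by
  set x := exp k - 1 with hx_def
  have hx : 0 < x := sub_pos.mpr (one_lt_exp_iff.mpr hk)
  have hA : HasDerivAt (fun k ↦ exp k - 1) (x + 1) k := by
    simpa [hx_def] using (hasDerivAt_exp k).sub_const 1
  have hsqrt := hA.rpow_const (p := 1/2) (Or.inl hx.ne')
  have hformula := ((hA.rpow_const (p := 3/2) (Or.inl hx.ne')).add (hsqrt.const_mul 6)).sub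
    (hsqrt.arctan.const_mul 6)
  have hw : w =ᶠ[𝓝 k] fun k ↦ (exp k - 1) ^ (3/2 : ℝ) + 6 * (exp k - 1) ^ (1/2 : ℝ)
      - 6 * arctan ((exp k - 1) ^ (1/2 : ℝ)) := by
    filter_upwards [Ioi_mem_nhds hk] with j hj using if_pos hj
  refine (hformula.congr_of_eventuallyEq hw).congr_deriv ?_
  set s := x ^ (1/2 : ℝ) with hs_def
  have hs : 0 < s := rpow_pos_of_pos hx _
  have hs2 : s ^ 2 = x := by rw [hs_def, ← rpow_natCast, ← rpow_mul hx.le]; norm_num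
  have h32 : x ^ (3/2 - 1 : ℝ) = s := by norm_num [hs_def]
  have hm12 : x ^ (1/2 - 1 : ℝ) = s⁻¹ := by rw [hs_def, ← rpow_neg hx.le]; norm_num
  have h32' : x ^ (3/2 : ℝ) = x * s := by
    rw [hs_def, ← rpow_one_add' hx.le (by norm_num)]; norm_num
  rw [wDeriv, ← hx_def, h32, hm12, h32', ← hs_def, ← hs2]
  field_simp
  ring

theorem tendsto_w_nhdsGT_zero : Tendsto w (𝓝[>] 0) (𝓝 0) := by
  have hcont : Continuous fun k ↦ (exp k - 1) ^ (3/2 : ℝ) + 6 * (exp k - 1) ^ (1/2 : ℝ)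
      - 6 * arctan ((exp k - 1) ^ (1/2 : ℝ)) := by
    fun_prop (disch := norm_num)
  have h0 := hcont.tendsto 0
  norm_num at h0
  exact (h0.mono_left nhdsWithin_le_nhds).congr'
    (eventually_nhdsWithin_of_forall fun k hk ↦ (if_pos hk).symm)

theorem measurable_w : Measurable w := by
  unfold w; exact Measurable.ite measurableSet_Ioi (by fun_prop) measurable_const

theorem abs_w_le (k : ℝ) : |w k| ≤ 19 * exp (3/2 * k) := by
  unfold w
  split_ifs with hk
  · set x := exp k - 1
    have hx : 0 ≤ x := sub_nonneg.mpr (one_le_exp hk.le)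
    have hxe : x ≤ exp k := by simp [x]
    have h32 : x ^ (3/2 : ℝ) ≤ exp (3/2 * k) := by
      rw [mul_comm, exp_mul]; exact rpow_le_rpow hx hxe (by norm_num)
    have h12 : x ^ (1/2 : ℝ) ≤ exp (3/2 * k) := by
      calc x ^ (1/2 : ℝ) ≤ exp (1/2 * k) := by
            rw [mul_comm, exp_mul]; exact rpow_le_rpow hx hxe (by norm_num)
        _ ≤ exp (3/2 * k) := exp_le_exp.mpr (by linarith)
    have harctan : |arctan (x ^ (1/2 : ℝ))| ≤ 2 := by
      have := arctan_mem_Ioo (x ^ (1/2 : ℝ))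
      rw [abs_le]; constructor <;> linarith [this.1, this.2, pi_le_four]
    have hone : 1 ≤ exp (3/2 * k) := one_le_exp (by linarith)
    have := rpow_nonneg hx (3/2 : ℝ)
    have := rpow_nonneg hx (1/2 : ℝ)
    rw [abs_le] at harctan ⊢
    constructor <;> nlinarith
  · simp [exp_nonneg]

theorem integrableOn_cexp_mul_wDeriv {z : ℂ} (hz : 3/2 < z.re) :
    IntegrableOn (fun k : ℝ ↦ Complex.exp (-k * z) * wDeriv k) (Ioi 0) := by
  have h32 := integrableOn_cexp_mul_exp_sub_one_rpow (p := 3/2) (by norm_num) hz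
  have h12 := integrableOn_cexp_mul_exp_sub_one_rpow (p := 1/2) (z := z) (by norm_num) (by linarith)
  refine IntegrableOn.congr_fun ((h32.const_mul (3/2)).add (h12.const_mul (9/2))) (fun k _ ↦ ?_)
    measurableSet_Ioi
  simp only [Pi.add_apply, wDeriv]; push_cast; ring

theorem Complex.Gamma_three_div_two : Complex.Gamma (3/2) = √π / 2 := by
  rw [show (3/2 : ℂ) = 1/2 + 1 by norm_num, Complex.Gamma_add_one _ (by norm_num),
    show (1/2 : ℂ) = ((1/2 : ℝ) : ℂ) by norm_num, Complex.Gamma_ofReal, Real.Gamma_one_half_eq]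
  push_cast; ring

theorem integral_cexp_mul_wDeriv {z : ℂ} (hz : 3/2 < z.re) :
    ∫ k in Ioi (0 : ℝ), Complex.exp (-k * z) * wDeriv k
      = 9 * √π * (z - 1) / ((2 * z - 1) * (2 * z - 3))
          * (Complex.Gamma (z + 1/2) / Complex.Gamma (z + 1)) := by
  have h32 := integrableOn_cexp_mul_exp_sub_one_rpow (p := 3/2) (by norm_num) hz
  have h12 := integrableOn_cexp_mul_exp_sub_one_rpow (p := 1/2) (z := z) (by norm_num) (by linarith)
  have hne32 : z - 3/2 ≠ 0 := fun h ↦ by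
    have := congr_arg Complex.re h; simp at this; linarith
  have hne12 : z - 1/2 ≠ 0 := fun h ↦ by
    have := congr_arg Complex.re h; simp at this; linarith
  have hΓ12 : Complex.Gamma (z - 1/2) = (z - 3/2) * Complex.Gamma (z - 3/2) := by
    rw [← Complex.Gamma_add_one _ hne32]; ring_nf
  have hΓ : Complex.Gamma (z + 1/2) = (z - 1/2) * Complex.Gamma (z - 1/2) := by
    rw [← Complex.Gamma_add_one _ hne12]; ring_nf
  calc ∫ k in Ioi (0 : ℝ), Complex.exp (-k * z) * wDeriv k
      = 3/2 * (∫ k in Ioi (0 : ℝ), Complex.exp (-k * z) * ((exp k - 1) ^ (3/2 : ℝ) : ℝ))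
        + 9/2 * ∫ k in Ioi (0 : ℝ), Complex.exp (-k * z) * ((exp k - 1) ^ (1/2 : ℝ) : ℝ) := by
        rw [← integral_const_mul, ← integral_const_mul, ← integral_add (h32.const_mul _)
          (h12.const_mul _)]
        refine setIntegral_congr_fun measurableSet_Ioi fun k _ ↦ ?_
        simp only [wDeriv]; push_cast; ring
    _ = _ := by
        rw [integral_cexp_mul_exp_sub_one_rpow (by norm_num) hz,
          integral_cexp_mul_exp_sub_one_rpow (by norm_num) (by linarith)]
        push_cast
        rw [Complex.Gamma_add_one _ (by norm_num), Complex.Gamma_three_div_two, hΓ, hΓ12,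
          show (1/2 : ℂ) + 1 = 3/2 by norm_num, Complex.Gamma_three_div_two]
        have h2z1 : 2 * z - 1 ≠ 0 := fun h ↦ hne12 (by linear_combination h / 2)
        have h2z3 : 2 * z - 3 ≠ 0 := fun h ↦ hne32 (by linear_combination h / 2)
        field_simp
        ring

theorem laplace_transform_w (z : ℂ) (hz : 3/2 < z.re) :
    ∫ k in Ioi (0:ℝ), Complex.exp (-k * z) * (w k : ℝ)
      = 9 * Real.sqrt π * (Complex.Gamma (z + 1/2) / Complex.Gamma (z + 1))
          * ((z - 1) / (z * (2*z - 1) * (2*z - 3))) := by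
  have hbound (k : ℝ) : ‖((w k : ℝ) : ℂ)‖ ≤ 19 * exp (3/2 * k) := by
    rw [Complex.norm_real, norm_eq_abs]; exact abs_w_le k
  have hparts := integral_cexp_mul_deriv (f := fun k ↦ ((w k : ℝ) : ℂ))
    (fun k hk ↦ (hasDerivAt_w hk).ofReal_comp)
    (by simpa [Function.comp_def] using
      (Complex.continuous_ofReal.tendsto 0).comp tendsto_w_nhdsGT_zero)
    (integrableOn_cexp_mul_wDeriv hz)
    (integrableOn_cexp_mul_of_norm_le
      (Complex.measurable_ofReal.comp measurable_w).aestronglyMeasurable hbound hz)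
    (tendsto_cexp_mul_atTop_of_norm_le hbound hz)
  rw [integral_cexp_mul_wDeriv hz] at hparts
  have hz0 : z ≠ 0 := fun h ↦ by simp [h] at hz; linarith
  rw [← mul_right_inj' hz0, ← hparts]
  field_simp
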